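/- Under the stated hypotheses, the inverse T⁻¹ maps Dom D onto Dom D, and the operator T⁻¹DT⁻¹, i.e. ψ ↦ T⁻¹(D(T⁻¹ψ)), with domain Dom D, is well-defined and self-adjoint on H. -/

import Mathlib

/-!
For `r > 0` a self-adjoint `D` satisfies `‖(D + i r) φ‖ ≥ r ‖φ‖`, and `D + i r` maps `Dom D` onto
`H` (its range is closed since `D` is closed, and dense since `D u = i r u` forces `u = 0`).
As `(D + i r) (T φ) = T ((D + i r) φ) + [D, T] φ`, for `ψ ∈ Dom D` the equation `T φ = ψ` in
`Dom D` becomes, for `u = (D + i r) φ`, `u + T⁻¹ [D, T] (D + i r)⁻¹ u = T⁻¹ (D + i r) ψ`; once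
`r > C ‖T⁻¹‖` the perturbation has norm `< 1` and a Neumann series solves it. So `T⁻¹` preserves
`Dom D`. Then `T⁻¹ D T⁻¹` is symmetric, and if `ψ` is in the domain of its adjoint, `T⁻¹ ψ` is in
`Dom D† = Dom D`, so `ψ = T (T⁻¹ ψ) ∈ Dom D`.
-/

def sandwichPMap {H : Type*} [NormedAddCommGroup H] [InnerProductSpace ℂ H]
    (D : H →ₗ.[ℂ] H) (T : H →L[ℂ] H)
    (hTdom : ∀ x ∈ D.domain, T x ∈ D.domain) : H →ₗ.[ℂ] H where
  domain := D.domain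
  toFun :=
    { toFun := fun ψ => T (D ⟨T ψ, hTdom ψ ψ.2⟩)
      map_add' := by
        intro x y
        have h : (⟨T ↑(x + y), hTdom _ (x + y).2⟩ : D.domain)
            = ⟨T ↑x, hTdom _ x.2⟩ + ⟨T ↑y, hTdom _ y.2⟩ := by
          apply Subtype.ext
          simp [map_add]
        try dsimp only
        rw [h, D.map_add, map_add]
      map_smul' := by
        intro c x
        have h : (⟨T ↑(c • x), hTdom _ (c • x).2⟩ : D.domain)
            = c • ⟨T ↑x, hTdom _ x.2⟩ := by
          apply Subtype.ext
          simp [map_smul]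
        try dsimp only
        rw [h, D.map_smul, map_smul]
        rfl }


open scoped InnerProductSpace ComplexConjugate
open Complex (I)

namespace LinearPMap

variable {E : Type*} [NormedAddCommGroup E] [InnerProductSpace ℂ E] {A : E →ₗ.[ℂ] E}

variable (A) in
def addIMul (r : ℝ) : A.domain →ₗ[ℂ] E := A.toFun + ((r : ℂ) * I) • A.domain.subtype

@[simp]
theorem addIMul_apply (r : ℝ) (x : A.domain) :
    A.addIMul r x = A x + ((r : ℂ) * I) • (x : E) := rfl

theorem IsFormalAdjoint.norm_addIMul_sq (hA : A.IsFormalAdjoint A) (r : ℝ) (x : A.domain) :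
    ‖A.addIMul r x‖ ^ 2 = ‖A x‖ ^ 2 + r ^ 2 * ‖(x : E)‖ ^ 2 := by
  have him : (⟪A x, (x : E)⟫_ℂ).im = 0 := by
    rw [← Complex.conj_eq_iff_im, inner_conj_symm]
    exact (hA x x).symm
  have hre : RCLike.re ⟪A x, ((r : ℂ) * I) • (x : E)⟫_ℂ = 0 := by simp [him]
  have hnorm : ‖(r : ℂ) * I‖ = |r| := by simp
  rw [addIMul_apply, norm_add_sq (𝕜 := ℂ), hre, norm_smul, hnorm, mul_pow, sq_abs]
  ring

theorem IsFormalAdjoint.mul_norm_le_norm_addIMul (hA : A.IsFormalAdjoint A) (r : ℝ)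
    (x : A.domain) : r * ‖(x : E)‖ ≤ ‖A.addIMul r x‖ := by
  have h := hA.norm_addIMul_sq r x
  nlinarith [norm_nonneg (A.addIMul r x), norm_nonneg (x : E), norm_nonneg (A x)]

theorem IsFormalAdjoint.mul_dist_le_dist_addIMul (hA : A.IsFormalAdjoint A) (r : ℝ)
    (x y : A.domain) : r * dist (x : E) y ≤ dist (A.addIMul r x) (A.addIMul r y) := by
  have h := hA.mul_norm_le_norm_addIMul r (x - y)
  rwa [_root_.map_sub, Submodule.coe_sub, ← dist_eq_norm, ← dist_eq_norm] at h

theorem IsFormalAdjoint.injective_addIMul (hA : A.IsFormalAdjoint A) {r : ℝ} (hr : 0 < r) :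
    Function.Injective (A.addIMul r) := fun x y hxy => by
  have h := hA.mul_dist_le_dist_addIMul r x y
  rw [hxy, dist_self] at h
  exact Subtype.ext (dist_le_zero.1 (nonpos_of_mul_nonpos_right h hr))

variable (A) in
def commutator (T : E →L[ℂ] E) (hT : ∀ x ∈ A.domain, T x ∈ A.domain) : A.domain →ₗ[ℂ] E :=
  A.toFun ∘ₗ (T : E →ₗ[ℂ] E).restrict hT - (T : E →ₗ[ℂ] E) ∘ₗ A.toFun

theorem commutator_apply (T : E →L[ℂ] E) (hT : ∀ x ∈ A.domain, T x ∈ A.domain) (x : A.domain) :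
    A.commutator T hT x = A ⟨T x, hT x x.2⟩ - T (A x) := rfl

theorem addIMul_apply_mk (T : E →L[ℂ] E) (hT : ∀ x ∈ A.domain, T x ∈ A.domain) (r : ℝ)
    (x : A.domain) :
    A.addIMul r ⟨T x, hT x x.2⟩ = T (A.addIMul r x) + A.commutator T hT x := by
  rw [addIMul_apply, addIMul_apply, commutator_apply, _root_.map_add, _root_.map_smul]
  abel

theorem _root_.sandwichPMap_apply (S : E →L[ℂ] E) (hS : ∀ x ∈ A.domain, S x ∈ A.domain)
    (x : (sandwichPMap A S hS).domain) : sandwichPMap A S hS x = S (A ⟨S x, hS x x.2⟩) := rfl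

theorem IsFormalAdjoint.sandwichPMap (hA : A.IsFormalAdjoint A) {S : E →L[ℂ] E}
    (hS : (S : E →ₗ[ℂ] E).IsSymmetric) (hSA : ∀ x ∈ A.domain, S x ∈ A.domain) :
    (sandwichPMap A S hSA).IsFormalAdjoint (sandwichPMap A S hSA) := fun x y => calc
  ⟪S (A ⟨S x, hSA x x.2⟩), (y : E)⟫_ℂ = ⟪A ⟨S x, hSA x x.2⟩, S y⟫_ℂ := hS _ _
  _ = ⟪S x, A ⟨S y, hSA y y.2⟩⟫_ℂ := hA ⟨S x, hSA x x.2⟩ ⟨S y, hSA y y.2⟩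
  _ = ⟪(x : E), S (A ⟨S y, hSA y y.2⟩)⟫_ℂ := hS _ _

variable [CompleteSpace E]

theorem _root_.IsSelfAdjoint.isFormalAdjoint (hA : IsSelfAdjoint A) : A.IsFormalAdjoint A := by
  simpa only [isSelfAdjoint_def.1 hA] using adjoint_isFormalAdjoint hA.dense_domain

theorem _root_.IsSelfAdjoint.exists_mem_domain_apply_eq (hA : IsSelfAdjoint A) {x w : E}
    (h : ∀ z : A.domain, ⟪w, (z : E)⟫_ℂ = ⟪x, A z⟫_ℂ) : ∃ hx : x ∈ A.domain, A ⟨x, hx⟩ = w := by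
  have hx : x ∈ A†.domain := mem_adjoint_domain_of_exists x ⟨w, h⟩
  have hA' := isSelfAdjoint_def.1 hA
  exact ⟨hA' ▸ hx, (hA'.symm.le.2 rfl).trans (adjoint_apply_eq hA.dense_domain ⟨x, hx⟩ h)⟩

theorem _root_.IsSelfAdjoint.isClosed_range_addIMul (hA : IsSelfAdjoint A) {r : ℝ} (hr : 0 < r) :
    _root_.IsClosed (LinearMap.range (A.addIMul r) : Set E) := by
  refine isClosed_of_closure_subset fun v hv => ?_
  obtain ⟨g, hg, hgv⟩ := mem_closure_iff_seq_limit.1 hv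
  choose x hx using hg
  have hcauchy : CauchySeq fun n => (x n : E) := by
    have hg := cauchySeq_iff_tendsto_dist_atTop_0.1 hgv.cauchySeq
    refine cauchySeq_iff_tendsto_dist_atTop_0.2 <| squeeze_zero (fun _ => dist_nonneg)
      (fun n => ?_) (by simpa using hg.const_mul r⁻¹)
    rw [← hx, ← hx, le_inv_mul_iff₀ hr]
    exact hA.isFormalAdjoint.mul_dist_le_dist_addIMul r _ _
  obtain ⟨y, hy⟩ := cauchySeq_tendsto_of_complete hcauchy
  have hAx : Filter.Tendsto (fun n => A (x n)) Filter.atTop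
      (nhds (v - ((r : ℂ) * I) • y)) := by
    have hAx : ∀ n, A (x n) = g n - ((r : ℂ) * I) • (x n : E) := fun n => by
      rw [← hx, addIMul_apply, add_sub_cancel_right]
    simpa only [hAx] using hgv.sub (hy.const_smul _)
  obtain ⟨z, hzy, hzv⟩ := (A.mem_graph_iff).1 <| hA.isClosed.mem_of_tendsto (hy.prodMk_nhds hAx)
    (Filter.Eventually.of_forall fun n => A.mem_graph (x n))
  exact LinearMap.mem_range.2 ⟨z, by rw [addIMul_apply, hzv, hzy, sub_add_cancel]⟩

theorem _root_.IsSelfAdjoint.orthogonal_range_addIMul (hA : IsSelfAdjoint A) {r : ℝ}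
    (hr : r ≠ 0) : (LinearMap.range (A.addIMul r))ᗮ = ⊥ := by
  refine (Submodule.eq_bot_iff _).2 fun u hu => ?_
  have h0 : ∀ x : A.domain, ⟪A.addIMul r x, u⟫_ℂ = 0 := fun x =>
    Submodule.inner_right_of_mem_orthogonal (LinearMap.mem_range_self _ x) hu
  have hconj : conj ((r : ℂ) * I) = -((r : ℂ) * I) := by simp
  obtain ⟨hu', hAu⟩ := hA.exists_mem_domain_apply_eq (x := u) (w := ((r : ℂ) * I) • u) fun x => by
    have hx := congrArg conj (h0 x)
    rw [addIMul_apply, inner_add_left, inner_smul_left, _root_.map_add, map_mul,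
      Complex.conj_conj, inner_conj_symm, inner_conj_symm, _root_.map_zero] at hx
    rw [inner_smul_left, hconj]
    linear_combination -hx
  have h := h0 ⟨u, hu'⟩
  rw [addIMul_apply, hAu, ← two_smul ℂ, smul_smul, inner_smul_left, mul_eq_zero] at h
  refine inner_self_eq_zero.1 (h.resolve_left ?_)
  simp [hr]

theorem _root_.IsSelfAdjoint.surjective_addIMul (hA : IsSelfAdjoint A) {r : ℝ} (hr : 0 < r) :
    Function.Surjective (A.addIMul r) := by
  rw [← LinearMap.range_eq_top, ← (hA.isClosed_range_addIMul hr).submodule_topologicalClosure_eq,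
    Submodule.topologicalClosure_eq_top_iff]
  exact hA.orthogonal_range_addIMul hr.ne'

noncomputable def _root_.IsSelfAdjoint.addIMulEquiv (hA : IsSelfAdjoint A) {r : ℝ} (hr : 0 < r) :
    A.domain ≃ₗ[ℂ] E :=
  LinearEquiv.ofBijective (A.addIMul r)
    ⟨hA.isFormalAdjoint.injective_addIMul hr, hA.surjective_addIMul hr⟩

theorem _root_.IsSelfAdjoint.addIMulEquiv_apply (hA : IsSelfAdjoint A) {r : ℝ} (hr : 0 < r)
    (x : A.domain) : hA.addIMulEquiv hr x = A.addIMul r x := rfl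

theorem _root_.IsSelfAdjoint.norm_addIMulEquiv_symm_le (hA : IsSelfAdjoint A) {r : ℝ}
    (hr : 0 < r) (u : E) : ‖((hA.addIMulEquiv hr).symm u : E)‖ ≤ r⁻¹ * ‖u‖ := by
  have h := hA.isFormalAdjoint.mul_norm_le_norm_addIMul r ((hA.addIMulEquiv hr).symm u)
  rwa [← hA.addIMulEquiv_apply hr, LinearEquiv.apply_symm_apply, ← le_inv_mul_iff₀ hr] at h

theorem _root_.IsSelfAdjoint.surjOn_domain_of_norm_commutator_le (hA : IsSelfAdjoint A)
    (T S : E →L[ℂ] E) (hTS : Function.LeftInverse T S) (hT : ∀ x ∈ A.domain, T x ∈ A.domain)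
    {C : ℝ} (hC0 : 0 ≤ C) (hC : ∀ x : A.domain, ‖A.commutator T hT x‖ ≤ C * ‖(x : E)‖) :
    Set.SurjOn T A.domain A.domain := by
  intro y hy
  set r := C * ‖S‖ + 1
  have hr : 0 < r := by positivity
  set R := (hA.addIMulEquiv hr).symm
  set B := A.commutator T hT
  have hK : ∀ u, ‖S (B (R u))‖ ≤ C * ‖S‖ / r * ‖u‖ := fun u => calc
    ‖S (B (R u))‖ ≤ ‖S‖ * (C * ‖(R u : E)‖) := S.le_opNorm_of_le (hC _)
    _ ≤ ‖S‖ * (C * (r⁻¹ * ‖u‖)) := by gcongr; exact hA.norm_addIMulEquiv_symm_le hr u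
    _ = C * ‖S‖ / r * ‖u‖ := by ring
  set K : E →L[ℂ] E := ((S : E →ₗ[ℂ] E) ∘ₗ B ∘ₗ R.toLinearMap).mkContinuous _ hK
  have hK1 : ‖-K‖ < 1 := by
    rw [norm_neg]
    refine (LinearMap.mkContinuous_norm_le _ (by positivity) hK).trans_lt ?_
    rw [div_lt_one hr]
    linarith
  obtain ⟨K', hK'⟩ := (isUnit_one_sub_of_norm_lt_one hK1).exists_right_inv
  set v := A.addIMul r ⟨y, hy⟩
  set u := K' (S v)
  have hu : u + S (B (R u)) = S v := by
    simpa [K] using congr($hK' (S v))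
  have hTRu : A.addIMul r ⟨T (R u), hT _ (R u).2⟩ = v := calc
    _ = T (A.addIMul r (R u)) + B (R u) := addIMul_apply_mk T hT r (R u)
    _ = T (u + S (B (R u))) := by
      rw [← hA.addIMulEquiv_apply hr, LinearEquiv.apply_symm_apply, _root_.map_add, hTS]
    _ = v := by rw [hu, hTS]
  exact ⟨R u, (R u).2, congrArg Subtype.val (hA.isFormalAdjoint.injective_addIMul hr hTRu)⟩

theorem IsFormalAdjoint.isSelfAdjoint {B : E →ₗ.[ℂ] E} (hB : B.IsFormalAdjoint B)
    (hd : Dense (B.domain : Set E)) (hdom : B†.domain ≤ B.domain) : IsSelfAdjoint B :=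
  (eq_of_le_of_domain_eq (hB.le_adjoint hd) (le_antisymm (hB.le_adjoint hd).1 hdom)).symm

theorem _root_.IsSelfAdjoint.adjoint_domain_sandwichPMap_le (hA : IsSelfAdjoint A)
    {S : E →L[ℂ] E} (hS : IsSelfAdjoint S) (hSA : ∀ x ∈ A.domain, S x ∈ A.domain)
    (T : E →L[ℂ] E) (hTS : Function.LeftInverse T S) (hST : Function.LeftInverse S T)
    (hT : ∀ x ∈ A.domain, T x ∈ A.domain) :
    (sandwichPMap A S hSA)†.domain ≤ A.domain := by
  intro ψ hψ
  have hd : Dense ((sandwichPMap A S hSA).domain : Set E) := hA.dense_domain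
  obtain ⟨hSψ, -⟩ := hA.exists_mem_domain_apply_eq (x := S ψ)
    (w := ContinuousLinearMap.adjoint T ((sandwichPMap A S hSA)† ⟨ψ, hψ⟩)) fun x => by
      rw [ContinuousLinearMap.adjoint_inner_left,
        adjoint_isFormalAdjoint hd ⟨ψ, hψ⟩ ⟨T x, hT x x.2⟩, sandwichPMap_apply]
      simp only [hST x]
      exact (hS.isSymmetric ψ (A x)).symm
  simpa only [hTS ψ] using hT _ hSψ

theorem _root_.IsSelfAdjoint.sandwichPMap (hA : IsSelfAdjoint A)
    {S : E →L[ℂ] E} (hS : IsSelfAdjoint S) (hSA : ∀ x ∈ A.domain, S x ∈ A.domain)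
    (T : E →L[ℂ] E) (hTS : Function.LeftInverse T S) (hST : Function.LeftInverse S T)
    (hT : ∀ x ∈ A.domain, T x ∈ A.domain) :
    IsSelfAdjoint (sandwichPMap A S hSA) :=
  (hA.isFormalAdjoint.sandwichPMap hS.isSymmetric hSA).isSelfAdjoint hA.dense_domain
    (hA.adjoint_domain_sandwichPMap_le hS hSA T hTS hST hT)

end LinearPMap

theorem sandwichPMap_inv_isSelfAdjoint_general
    {H : Type*} [NormedAddCommGroup H] [InnerProductSpace ℂ H] [CompleteSpace H]
    (D : H →ₗ.[ℂ] H) (hsa : IsSelfAdjoint D)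
    (T Tinv : H →L[ℂ] H) (hTsa : IsSelfAdjoint T)
    (hTinv₁ : Tinv.comp T = ContinuousLinearMap.id ℂ H)
    (hTinv₂ : T.comp Tinv = ContinuousLinearMap.id ℂ H)
    (hTdom : ∀ x ∈ D.domain, T x ∈ D.domain)
    (hcomm : ∃ C : ℝ, 0 ≤ C ∧
      ∀ ψ : D.domain, ‖D ⟨T ψ, hTdom ψ ψ.2⟩ - T (D ψ)‖ ≤ C * ‖(ψ : H)‖) :
    Tinv '' (D.domain : Set H) = (D.domain : Set H) ∧
      ∃ hTinvdom : ∀ x ∈ D.domain, Tinv x ∈ D.domain,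
        IsSelfAdjoint (sandwichPMap D Tinv hTinvdom) := by
  obtain ⟨C, hC0, hC⟩ := hcomm
  have hTTinv : Function.LeftInverse T Tinv := fun x => congr($hTinv₂ x)
  have hTinvT : Function.LeftInverse Tinv T := fun x => congr($hTinv₁ x)
  have hTinvsa : IsSelfAdjoint Tinv := by
    let : Invertible T := ⟨Tinv, hTinv₁, hTinv₂⟩
    exact hTsa.invOf
  have hTinvdom : Set.MapsTo Tinv D.domain D.domain := (hTinvT.leftInvOn _).mapsTo
    (hsa.surjOn_domain_of_norm_commutator_le T Tinv hTTinv hTdom hC0 hC)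
  refine ⟨hTinvdom.image_subset.antisymm ((hTinvT.leftInvOn _).surjOn hTdom),
    fun x hx => hTinvdom hx, ?_⟩
  exact hsa.sandwichPMap hTinvsa _ T hTTinv hTinvT hTdom

/-- Let `D` be a densely defined self-adjoint operator on a complex Hilbert
space `H`, and `T` a bounded self-adjoint invertible operator with `T (Dom D) ⊆ Dom D` and
bounded commutator `[D, T]` on `Dom D`.  Then `T⁻¹` maps `Dom D` onto `Dom D`, and the
operator `T⁻¹DT⁻¹ : ψ ↦ T⁻¹ (D (T⁻¹ ψ))` with domain `Dom D` is well-defined and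
self-adjoint. -/
theorem sandwichPMap_inv_isSelfAdjoint
    {H : Type*} [NormedAddCommGroup H] [InnerProductSpace ℂ H] [CompleteSpace H]
    (D : H →ₗ.[ℂ] H) (hdense : Dense (D.domain : Set H)) (hsa : IsSelfAdjoint D)
    (T Tinv : H →L[ℂ] H) (hTsa : IsSelfAdjoint T)
    (hTinv₁ : Tinv.comp T = ContinuousLinearMap.id ℂ H)
    (hTinv₂ : T.comp Tinv = ContinuousLinearMap.id ℂ H)
    (hTdom : ∀ x ∈ D.domain, T x ∈ D.domain)
    (hcomm : ∃ C : ℝ, 0 ≤ C ∧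
      ∀ ψ : D.domain, ‖D ⟨T ψ, hTdom ψ ψ.2⟩ - T (D ψ)‖ ≤ C * ‖(ψ : H)‖) :
    Tinv '' (D.domain : Set H) = (D.domain : Set H) ∧
      ∃ hTinvdom : ∀ x ∈ D.domain, Tinv x ∈ D.domain,
        IsSelfAdjoint (sandwichPMap D Tinv hTinvdom) :=
  sandwichPMap_inv_isSelfAdjoint_general D hsa T Tinv hTsa hTinv₁ hTinv₂ hTdom hcomm
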